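/- arXiv:1311.2692 — 2 statements merged into one kernel-verified Lean document; each statement's English description precedes it below -/
import Mathlib

section
/- For all real μ and λ, and for every ε > 0, there exists C_ε > 0 such that every φ ∈ D(G) lies in the domain of H_{μ,λ} and ‖H_{μ,λ} φ‖ ≤ ε ‖G φ‖ + C_ε ‖φ‖. -/
/-!
Formalization of statements about the Gribov operator
`H_{λ″} = λ″ a*³a³ + μ a*a + iλ a*(a + a*)a` acting on the Bargmann space `E`.

The Bargmann space is modelled abstractly: a complex Hilbert space `E` together with a
Hilbert basis `(e n)_{n : ℕ}` (corresponding to `e_n(z) = zⁿ/√n!`).  Operators are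
specified through their action on the basis / on basis coefficients, exactly as in the
paper: `G e_n = n(n-1)(n-2) e_n`,
`H_{μ,λ} e_n = iλ(n-1)√n e_{n-1} + μ n e_n + iλ n √(n+1) e_{n+1}`.

On basis coefficients `c`, `H_{μ,λ}` is a three-term recurrence with coefficients of size
`O(n^{3/2})`, so `‖H_{μ,λ} φ‖² ≤ 3(μ² + 3λ²) ∑ n³ |c_n|²`; the two shifted terms are reindexed
without loss because the weight `n³` vanishes at `0`. Since `n³ ≤ 4 n(n-1)(n-2) + 27`, Young's
inequality gives `K n³ ≤ ε² λ_n² + C_ε`, hence `‖H_{μ,λ} φ‖² ≤ ε² ‖G φ‖² + C_ε ‖φ‖²`, and taking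
square roots gives the claim.
-/

noncomputable section

open Filter Topology MeasureTheory
open scoped InnerProductSpace ComplexInnerProductSpace

/-- Eigenvalues of `G = a*³a³` : `λ_n = n(n-1)(n-2)`. -/
def gEig (n : ℕ) : ℝ := (n : ℝ) * ((n : ℝ) - 1) * ((n : ℝ) - 2)

/-- Basis coefficients of `H_{μ,λ} φ`, where `φ` has basis coefficients `c`:
`(H_{μ,λ} φ)_m = μ m c_m + iλ ( m √(m+1) c_{m+1} + (m-1) √m c_{m-1} )`
(coming from `H_{μ,λ} e_n = iλ(n-1)√n e_{n-1} + μ n e_n + iλ n √(n+1) e_{n+1}`). -/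
def hCoef (μ lam : ℝ) (c : ℕ → ℂ) (m : ℕ) : ℂ :=
  (μ : ℂ) * (m : ℂ) * c m +
    Complex.I * (lam : ℂ) *
      ((m : ℂ) * (Real.sqrt (m + 1) : ℂ) * c (m + 1) +
        ((m : ℂ) - 1) * (Real.sqrt m : ℂ) * c (m - 1))

theorem HilbertBasis.hasSum_norm_sq_repr {ι 𝕜 E : Type*} [RCLike 𝕜] [NormedAddCommGroup E]
    [InnerProductSpace 𝕜 E] (b : HilbertBasis ι 𝕜 E) (x : E) :
    HasSum (fun i => ‖b.repr x i‖ ^ 2) (‖x‖ ^ 2) := by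
  simpa [b.repr.norm_map] using lp.hasSum_norm (p := 2) (by norm_num) (b.repr x)

theorem tsum_comp_succ_of_eq_zero {M : Type*} [AddCommMonoid M] [TopologicalSpace M]
    {f : ℕ → M} (h0 : f 0 = 0) : ∑' n, f (n + 1) = ∑' n, f n :=
  Nat.succ_injective.tsum_eq fun n hn => by
    obtain ⟨k, rfl⟩ := Nat.exists_eq_add_one_of_ne_zero (n := n) (by rintro rfl; exact hn h0)
    exact ⟨k, rfl⟩

theorem norm_add₃_sq_le {E : Type*} [SeminormedAddCommGroup E] (x y z : E) :
    ‖x + y + z‖ ^ 2 ≤ 3 * (‖x‖ ^ 2 + ‖y‖ ^ 2 + ‖z‖ ^ 2) := by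
  have := norm_add₃_le (a := x) (b := y) (c := z)
  nlinarith [norm_nonneg (x + y + z), sq_nonneg (‖x‖ - ‖y‖), sq_nonneg (‖x‖ - ‖z‖),
    sq_nonneg (‖y‖ - ‖z‖)]

theorem le_mul_add_sqrt_mul_of_sq_le {x y z ε C : ℝ} (hy : 0 ≤ y) (hz : 0 ≤ z) (hε : 0 ≤ ε)
    (hC : 0 ≤ C) (h : x ^ 2 ≤ ε ^ 2 * y ^ 2 + C * z ^ 2) : x ≤ ε * y + √C * z := by
  refine le_of_sq_le_sq (h.trans ?_) (by positivity)
  nlinarith [Real.sq_sqrt hC, mul_nonneg (mul_nonneg hε hy) (mul_nonneg (Real.sqrt_nonneg C) hz)]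

theorem cube_le_four_mul_gEig_add (n : ℕ) : (n : ℝ) ^ 3 ≤ 4 * gEig n + 27 := by
  rcases lt_or_ge n 4 with hn | hn
  · interval_cases n <;> norm_num [gEig]
  · have hn : (4 : ℝ) ≤ n := by exact_mod_cast hn
    unfold gEig
    nlinarith [mul_nonneg (by linarith : (0 : ℝ) ≤ n)
      (by nlinarith : (0 : ℝ) ≤ 3 * (n : ℝ) ^ 2 - 12 * n + 8)]

theorem exists_mul_cube_le_gEig_sq (K : ℝ) {δ : ℝ} (hδ : 0 < δ) :
    ∃ C > 0, ∀ n : ℕ, K * (n : ℝ) ^ 3 ≤ δ * gEig n ^ 2 + C := by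
  refine ⟨27 * |K| + 4 * K ^ 2 / δ + 1, by positivity, fun n => ?_⟩
  have hcube := cube_le_four_mul_gEig_add n
  have hyoung : 4 * |K| * gEig n ≤ δ * gEig n ^ 2 + 4 * K ^ 2 / δ := by
    have hsq : δ * gEig n ^ 2 + 4 * |K| ^ 2 / δ - 4 * |K| * gEig n =
        (δ * gEig n - 2 * |K|) ^ 2 / δ := by
      field_simp
      ring
    rw [← sq_abs K, ← sub_nonneg, hsq]
    positivity
  calc K * (n : ℝ) ^ 3 ≤ |K| * (4 * gEig n + 27) :=
        (mul_le_mul_of_nonneg_right (le_abs_self K) (by positivity)).trans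
          (mul_le_mul_of_nonneg_left hcube (abs_nonneg K))
    _ ≤ δ * gEig n ^ 2 + (27 * |K| + 4 * K ^ 2 / δ + 1) := by linarith

def cubeWeightedNormSq (c : ℕ → ℂ) (n : ℕ) : ℝ := (n : ℝ) ^ 3 * ‖c n‖ ^ 2

theorem cubeWeightedNormSq_nonneg (c : ℕ → ℂ) (n : ℕ) : 0 ≤ cubeWeightedNormSq c n := by
  unfold cubeWeightedNormSq; positivity

@[simp]
theorem cubeWeightedNormSq_zero (c : ℕ → ℂ) : cubeWeightedNormSq c 0 = 0 := by
  simp [cubeWeightedNormSq]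

theorem natCast_sq_le_cube (n : ℕ) : (n : ℝ) ^ 2 ≤ n ^ 3 := by
  rcases n.eq_zero_or_pos with rfl | hn
  · simp
  · exact pow_le_pow_right₀ (by exact_mod_cast hn) (by norm_num)

theorem norm_sq_hCoef_le (μ lam : ℝ) (c : ℕ → ℂ) (m : ℕ) :
    ‖hCoef μ lam c m‖ ^ 2 ≤ 3 * (μ ^ 2 * cubeWeightedNormSq c m +
      lam ^ 2 * cubeWeightedNormSq c (m + 1) + 2 * lam ^ 2 * cubeWeightedNormSq c (m - 1)) := by
  have hdiag : ‖(μ : ℂ) * m * c m‖ ^ 2 ≤ μ ^ 2 * cubeWeightedNormSq c m := by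
    simp only [cubeWeightedNormSq, norm_mul, Complex.norm_real, Complex.norm_natCast,
      Real.norm_eq_abs, mul_pow, sq_abs]
    rw [← mul_assoc]
    exact mul_le_mul_of_nonneg_right
      (mul_le_mul_of_nonneg_left (natCast_sq_le_cube m) (sq_nonneg μ)) (sq_nonneg _)
  have hup : ‖Complex.I * lam * (m * (√(m + 1) : ℝ) * c (m + 1))‖ ^ 2 ≤
      lam ^ 2 * cubeWeightedNormSq c (m + 1) := by
    simp only [cubeWeightedNormSq, norm_mul, Complex.norm_real, Complex.norm_natCast,
      Complex.norm_I, Real.norm_eq_abs, mul_pow, sq_abs, one_mul,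
      Real.sq_sqrt (by positivity : (0 : ℝ) ≤ m + 1), Nat.cast_add, Nat.cast_one]
    gcongr
    nlinarith [(m.cast_nonneg : (0 : ℝ) ≤ m)]
  have hdown : ‖Complex.I * lam * ((m - 1) * (√m : ℝ) * c (m - 1))‖ ^ 2 ≤
      2 * lam ^ 2 * cubeWeightedNormSq c (m - 1) := by
    rcases m with _ | k
    · simp
    simp only [cubeWeightedNormSq, Nat.add_sub_cancel, Nat.cast_add_one, add_sub_cancel_right,
      norm_mul, Complex.norm_real, Complex.norm_natCast, Complex.norm_I, Real.norm_eq_abs,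
      mul_pow, sq_abs, one_mul, Real.sq_sqrt (by positivity : (0 : ℝ) ≤ k + 1)]
    have hk : (k : ℝ) ^ 2 * (k + 1) ≤ 2 * k ^ 3 := by linarith [natCast_sq_le_cube k]
    have := mul_le_mul_of_nonneg_left (mul_le_mul_of_nonneg_right hk (sq_nonneg ‖c k‖))
      (sq_nonneg lam)
    linarith
  calc ‖hCoef μ lam c m‖ ^ 2
      = ‖(μ : ℂ) * m * c m + Complex.I * lam * (m * (√(m + 1) : ℝ) * c (m + 1)) +
          Complex.I * lam * ((m - 1) * (√m : ℝ) * c (m - 1))‖ ^ 2 := by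
        rw [hCoef, mul_add, add_assoc]
    _ ≤ _ := (norm_add₃_sq_le _ _ _).trans (by linarith)

section
variable (μ lam : ℝ) {c : ℕ → ℂ} (hc : Summable (cubeWeightedNormSq c))
include hc

theorem hasSum_hCoef_majorant :
    HasSum (fun m => 3 * (μ ^ 2 * cubeWeightedNormSq c m +
      lam ^ 2 * cubeWeightedNormSq c (m + 1) + 2 * lam ^ 2 * cubeWeightedNormSq c (m - 1)))
      (3 * (μ ^ 2 + 3 * lam ^ 2) * ∑' n, cubeWeightedNormSq c n) := by
  have hsucc : HasSum (fun m => cubeWeightedNormSq c (m + 1)) (∑' n, cubeWeightedNormSq c n) := by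
    rw [← tsum_comp_succ_of_eq_zero (cubeWeightedNormSq_zero c)]
    exact ((summable_nat_add_iff 1).2 hc).hasSum
  have hpred : HasSum (fun m => cubeWeightedNormSq c (m - 1)) (∑' n, cubeWeightedNormSq c n) := by
    have h := tsum_comp_succ_of_eq_zero (f := fun m => cubeWeightedNormSq c (m - 1)) (by simp)
    simp only [Nat.add_sub_cancel] at h
    exact h ▸ ((summable_nat_add_iff 1).1 (by simpa using hc)).hasSum
  set S := ∑' n, cubeWeightedNormSq c n
  rw [show 3 * (μ ^ 2 + 3 * lam ^ 2) * S = 3 * (μ ^ 2 * S + lam ^ 2 * S + 2 * lam ^ 2 * S) by ring]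
  exact (((hc.hasSum.mul_left (μ ^ 2)).add (hsucc.mul_left (lam ^ 2))).add
    (hpred.mul_left (2 * lam ^ 2))).mul_left 3

theorem summable_norm_sq_hCoef : Summable fun m => ‖hCoef μ lam c m‖ ^ 2 :=
  (hasSum_hCoef_majorant μ lam hc).summable.of_nonneg_of_le (fun _ => sq_nonneg _)
    (norm_sq_hCoef_le μ lam c)

theorem tsum_norm_sq_hCoef_le :
    ∑' m, ‖hCoef μ lam c m‖ ^ 2 ≤ 3 * (μ ^ 2 + 3 * lam ^ 2) * ∑' n, cubeWeightedNormSq c n :=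
  hasSum_le (norm_sq_hCoef_le μ lam c) (summable_norm_sq_hCoef μ lam hc).hasSum
    (hasSum_hCoef_majorant μ lam hc)

end

section
variable {c : ℕ → ℂ} (hc : Summable fun n => ‖c n‖ ^ 2)
  (hGc : Summable fun n => gEig n ^ 2 * ‖c n‖ ^ 2)
include hc hGc

theorem summable_cubeWeightedNormSq : Summable (cubeWeightedNormSq c) := by
  obtain ⟨C, -, hC⟩ := exists_mul_cube_le_gEig_sq 1 one_pos
  refine (hGc.add (hc.mul_left C)).of_nonneg_of_le (cubeWeightedNormSq_nonneg c) fun n => ?_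
  have := mul_le_mul_of_nonneg_right (hC n) (sq_nonneg ‖c n‖)
  simp only [cubeWeightedNormSq]
  linarith

theorem mul_tsum_cubeWeightedNormSq_le {K δ C : ℝ}
    (hKC : ∀ n : ℕ, K * (n : ℝ) ^ 3 ≤ δ * gEig n ^ 2 + C) :
    K * ∑' n, cubeWeightedNormSq c n ≤
      δ * ∑' n, gEig n ^ 2 * ‖c n‖ ^ 2 + C * ∑' n, ‖c n‖ ^ 2 := by
  refine hasSum_le (fun n => ?_) ((summable_cubeWeightedNormSq hc hGc).hasSum.mul_left K)
    ((hGc.hasSum.mul_left δ).add (hc.hasSum.mul_left C))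
  have := mul_le_mul_of_nonneg_right (hKC n) (sq_nonneg ‖c n‖)
  simp only [cubeWeightedNormSq]
  linarith

end

theorem gribov_H_relatively_bounded_by_G_general
    {E : Type} [NormedAddCommGroup E] [InnerProductSpace ℂ E] [CompleteSpace E]
    (e : HilbertBasis ℕ ℂ E) (μ lam : ℝ) (G H : E →ₗ.[ℂ] E)
    (hGact : ∀ (φ : G.domain) (n : ℕ), e.repr (G φ) n = (gEig n : ℂ) * e.repr (φ : E) n)
    (hHdom : ∀ φ : E,
      φ ∈ H.domain ↔ Summable fun m : ℕ => ‖hCoef μ lam (fun n => e.repr φ n) m‖ ^ 2)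
    (hHact : ∀ (φ : H.domain) (m : ℕ),
      e.repr (H φ) m = hCoef μ lam (fun n => e.repr (φ : E) n) m) :
    ∀ ε : ℝ, 0 < ε → ∃ C : ℝ, 0 < C ∧
      ∀ φ : G.domain, ∃ h : (φ : E) ∈ H.domain,
        ‖H ⟨(φ : E), h⟩‖ ≤ ε * ‖G φ‖ + C * ‖(φ : E)‖ := by
  intro ε hε
  obtain ⟨C, hC, hcube⟩ := exists_mul_cube_le_gEig_sq (3 * (μ ^ 2 + 3 * lam ^ 2)) (pow_pos hε 2)
  refine ⟨√C, Real.sqrt_pos.2 hC, fun φ => ?_⟩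
  set c : ℕ → ℂ := fun n => e.repr (φ : E) n
  have hφ : HasSum (fun n => ‖c n‖ ^ 2) (‖(φ : E)‖ ^ 2) := e.hasSum_norm_sq_repr φ
  have hGφ : HasSum (fun n => gEig n ^ 2 * ‖c n‖ ^ 2) (‖G φ‖ ^ 2) := by
    simpa [hGact, mul_pow] using e.hasSum_norm_sq_repr (G φ)
  have hc := summable_cubeWeightedNormSq hφ.summable hGφ.summable
  have hdom := (hHdom φ).2 (summable_norm_sq_hCoef μ lam hc)
  refine ⟨hdom, le_mul_add_sqrt_mul_of_sq_le (norm_nonneg _) (norm_nonneg _) hε.le hC.le ?_⟩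
  calc ‖H ⟨φ, hdom⟩‖ ^ 2 = ∑' m, ‖hCoef μ lam c m‖ ^ 2 := by
        simp only [c, ← hHact ⟨φ, hdom⟩]
        exact (e.hasSum_norm_sq_repr _).tsum_eq.symm
    _ ≤ 3 * (μ ^ 2 + 3 * lam ^ 2) * ∑' n, cubeWeightedNormSq c n :=
        tsum_norm_sq_hCoef_le μ lam hc
    _ ≤ ε ^ 2 * ∑' n, gEig n ^ 2 * ‖c n‖ ^ 2 + C * ∑' n, ‖c n‖ ^ 2 :=
        mul_tsum_cubeWeightedNormSq_le hφ.summable hGφ.summable hcube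
    _ = ε ^ 2 * ‖G φ‖ ^ 2 + C * ‖(φ : E)‖ ^ 2 := by rw [hGφ.tsum_eq, hφ.tsum_eq]

/-- For all real `μ`, `λ` and every `ε > 0` there is `C_ε > 0` such that
every `φ ∈ D(G)` lies in the domain of `H_{μ,λ}` and
`‖H_{μ,λ} φ‖ ≤ ε ‖G φ‖ + C_ε ‖φ‖`. -/
theorem gribov_H_relatively_bounded_by_G
    {E : Type} [NormedAddCommGroup E] [InnerProductSpace ℂ E] [CompleteSpace E]
    (e : HilbertBasis ℕ ℂ E) (μ lam : ℝ) (G H : E →ₗ.[ℂ] E)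
    (hGdom : ∀ φ : E, φ ∈ G.domain ↔ Summable fun n : ℕ => gEig n ^ 2 * ‖e.repr φ n‖ ^ 2)
    (hGact : ∀ (φ : G.domain) (n : ℕ), e.repr (G φ) n = (gEig n : ℂ) * e.repr (φ : E) n)
    (hHdom : ∀ φ : E,
      φ ∈ H.domain ↔ Summable fun m : ℕ => ‖hCoef μ lam (fun n => e.repr φ n) m‖ ^ 2)
    (hHact : ∀ (φ : H.domain) (m : ℕ),
      e.repr (H φ) m = hCoef μ lam (fun n => e.repr (φ : E) n) m) :
    ∀ ε : ℝ, 0 < ε → ∃ C : ℝ, 0 < C ∧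
      ∀ φ : G.domain, ∃ h : (φ : E) ∈ H.domain,
        ‖H ⟨(φ : E), h⟩‖ ≤ ε * ‖G φ‖ + C * ‖(φ : E)‖ :=
  gribov_H_relatively_bounded_by_G_general e μ lam G H hGact hHdom hHact
end
end

section
/- For all real μ and λ, and for every ε > 0, there exists C_ε > 0 such that |⟨H_{μ,λ} φ, φ⟩| ≤ ε ⟨G φ, φ⟩ + C_ε ‖φ‖² for all φ ∈ D(G) (note that ⟨Gφ, φ⟩ = ‖a³φ‖² ≥ 0). -/
/-!
Formalization of statements about the Gribov operator
`H_{λ″} = λ″ a*³a³ + μ a*a + iλ a*(a + a*)a` acting on the Bargmann space `E`.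

The Bargmann space is modelled abstractly: a complex Hilbert space `E` together with a
Hilbert basis `(e n)_{n : ℕ}` (corresponding to `e_n(z) = zⁿ/√n!`).  Operators are
specified through their action on the basis / on basis coefficients, exactly as in the
paper: `G e_n = n(n-1)(n-2) e_n`,
`H_{μ,λ} e_n = iλ(n-1)√n e_{n-1} + μ n e_n + iλ n √(n+1) e_{n+1}`.
-/

noncomputable section

open Filter Topology MeasureTheory
open scoped InnerProductSpace ComplexInnerProductSpace

set_option linter.unusedSectionVars false
set_option maxHeartbeats 1000000

variable {E : Type} [NormedAddCommGroup E] [InnerProductSpace ℂ E] [CompleteSpace E]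

lemma aux_inner_tsum (e : HilbertBasis ℕ ℂ E) (x y : E) :
    ⟪x, y⟫ = ∑' n : ℕ, (starRingEnd ℂ) (e.repr x n) * e.repr y n := by
  rw [← e.tsum_inner_mul_inner x y]
  refine tsum_congr fun n => ?_
  rw [← e.repr_apply_apply, ← inner_conj_symm, ← e.repr_apply_apply]

lemma aux_summable_sq (e : HilbertBasis ℕ ℂ E) (x : E) :
    Summable fun n : ℕ => ‖e.repr x n‖ ^ 2 := by
  have h := e.summable_inner_mul_inner x x
  have h2 : Summable fun n : ℕ => ((‖e.repr x n‖ ^ 2 : ℝ) : ℂ) := by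
    refine h.congr fun n => ?_
    rw [← e.repr_apply_apply, ← inner_conj_symm, ← e.repr_apply_apply, RCLike.conj_mul]
    norm_cast
  exact Complex.summable_ofReal.mp h2

lemma aux_norm_sq (e : HilbertBasis ℕ ℂ E) (x : E) :
    ‖x‖ ^ 2 = ∑' n : ℕ, ‖e.repr x n‖ ^ 2 := by
  have h2 : ((‖x‖ ^ 2 : ℝ) : ℂ) = ((∑' n : ℕ, ‖e.repr x n‖ ^ 2 : ℝ) : ℂ) := by
    rw [Complex.ofReal_tsum]
    calc ((‖x‖ ^ 2 : ℝ) : ℂ) = ⟪x, x⟫ := by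
          rw [inner_self_eq_norm_sq_to_K]; norm_cast
      _ = ∑' n : ℕ, (starRingEnd ℂ) (e.repr x n) * e.repr x n := aux_inner_tsum e x x
      _ = ∑' n : ℕ, ((‖e.repr x n‖ ^ 2 : ℝ) : ℂ) := by
          refine tsum_congr fun n => ?_
          rw [RCLike.conj_mul]; norm_cast
  exact_mod_cast h2

lemma gEig_nonneg (n : ℕ) : 0 ≤ gEig n := by
  rcases n with _|_|_|k
  · norm_num [gEig]
  · norm_num [gEig]
  · norm_num [gEig]
  · have : (0:ℝ) ≤ (k:ℝ) := Nat.cast_nonneg k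
    unfold gEig; push_cast
    nlinarith [mul_nonneg (mul_nonneg this this) this, mul_nonneg this this]

lemma cube_le_gEig (n : ℕ) : ((n:ℝ)+2)^3 ≤ 125 * gEig n + 64 := by
  rcases n with _|_|_|k
  · norm_num [gEig]
  · norm_num [gEig]
  · norm_num [gEig]
  · have : (0:ℝ) ≤ (k:ℝ) := Nat.cast_nonneg k
    unfold gEig; push_cast
    nlinarith [mul_nonneg (mul_nonneg this this) this, mul_nonneg this this]

/-- `D c n = (n+2)^3 ‖c n‖²`. -/
def auxD (c : ℕ → ℂ) (n : ℕ) : ℝ := ((n:ℝ)+2)^3 * ‖c n‖^2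

lemma auxD_nonneg (c : ℕ → ℂ) (n : ℕ) : 0 ≤ auxD c n := by
  unfold auxD; positivity

lemma hCoef_sq_le (μ lam K : ℝ) (hμ : 3*μ^2 ≤ K) (hlam2 : 3*lam^2 ≤ K)
    (c : ℕ → ℂ) (m : ℕ) :
    ‖hCoef μ lam c m‖^2 ≤ K * (auxD c m + auxD c (m+1) + auxD c (m-1)) := by
  have hK0 : 0 ≤ K := le_trans (by positivity) hμ
  have hm0 : (0:ℝ) ≤ (m:ℝ) := Nat.cast_nonneg m
  have hm2 : (0:ℝ) ≤ (m:ℝ)*(m:ℝ) := mul_nonneg hm0 hm0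
  have hm3 : (0:ℝ) ≤ (m:ℝ)*(m:ℝ)*(m:ℝ) := mul_nonneg hm2 hm0
  set a : ℂ := (μ : ℂ) * (m : ℂ) * c m with ha
  set b : ℂ := Complex.I * (lam : ℂ) * ((m : ℂ) * (Real.sqrt (m + 1) : ℂ) * c (m + 1)) with hb
  set d : ℂ := Complex.I * (lam : ℂ) * (((m : ℂ) - 1) * (Real.sqrt m : ℂ) * c (m - 1)) with hd
  have hsplit : hCoef μ lam c m = a + b + d := by
    rw [hCoef, ha, hb, hd]; ring
  have h1 : ‖hCoef μ lam c m‖ ≤ ‖a‖ + ‖b‖ + ‖d‖ := by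
    rw [hsplit]; exact norm_add₃_le
  have h2 : ‖hCoef μ lam c m‖^2 ≤ (‖a‖ + ‖b‖ + ‖d‖)^2 :=
    pow_le_pow_left₀ (norm_nonneg _) h1 2
  have h3 : (‖a‖ + ‖b‖ + ‖d‖)^2 ≤ 3*(‖a‖^2 + ‖b‖^2 + ‖d‖^2) := by
    nlinarith [sq_nonneg (‖a‖ - ‖b‖), sq_nonneg (‖a‖ - ‖d‖), sq_nonneg (‖b‖ - ‖d‖)]
  have hA : ‖a‖^2 = μ^2 * (m:ℝ)^2 * ‖c m‖^2 := by
    rw [ha]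
    simp only [norm_mul, Complex.norm_real, Complex.norm_natCast, Real.norm_eq_abs]
    calc (|μ| * (m:ℝ) * ‖c m‖)^2 = |μ|^2 * (m:ℝ)^2 * ‖c m‖^2 := by ring
      _ = μ^2 * (m:ℝ)^2 * ‖c m‖^2 := by rw [sq_abs]
  have hB : ‖b‖^2 = lam^2 * (m:ℝ)^2 * ((m:ℝ)+1) * ‖c (m+1)‖^2 := by
    rw [hb]
    simp only [norm_mul, Complex.norm_I, one_mul, Complex.norm_real, Complex.norm_natCast,
      Real.norm_eq_abs]
    rw [abs_of_nonneg (Real.sqrt_nonneg _)]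
    have hs : Real.sqrt ((m:ℝ) + 1) ^ 2 = (m:ℝ)+1 := Real.sq_sqrt (by positivity)
    calc (|lam| * ((m:ℝ) * Real.sqrt ((m:ℝ)+1) * ‖c (m+1)‖))^2
        = |lam|^2 * (m:ℝ)^2 * Real.sqrt ((m:ℝ)+1)^2 * ‖c (m+1)‖^2 := by ring
      _ = lam^2 * (m:ℝ)^2 * ((m:ℝ)+1) * ‖c (m+1)‖^2 := by rw [sq_abs, hs]
  have hD : ‖d‖^2 = lam^2 * ((m:ℝ)-1)^2 * (m:ℝ) * ‖c (m-1)‖^2 := by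
    rw [hd]
    have hcast : ((m:ℂ) - 1) = (((m:ℝ) - 1 : ℝ) : ℂ) := by push_cast; ring
    rw [hcast]
    simp only [norm_mul, Complex.norm_I, one_mul, Complex.norm_real, Real.norm_eq_abs]
    rw [abs_of_nonneg (Real.sqrt_nonneg _)]
    have hs : Real.sqrt ((m:ℝ)) ^ 2 = (m:ℝ) := Real.sq_sqrt hm0
    calc (|lam| * (|(m:ℝ)-1| * Real.sqrt (m:ℝ) * ‖c (m-1)‖))^2
        = |lam|^2 * |(m:ℝ)-1|^2 * Real.sqrt (m:ℝ)^2 * ‖c (m-1)‖^2 := by ring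
      _ = lam^2 * ((m:ℝ)-1)^2 * (m:ℝ) * ‖c (m-1)‖^2 := by rw [sq_abs, sq_abs, hs]
  have tA : 3*‖a‖^2 ≤ K * auxD c m := by
    have hc : (m:ℝ)^2 ≤ ((m:ℝ)+2)^3 := by nlinarith [hm0, hm2, hm3]
    have key : (3*μ^2)*(m:ℝ)^2 ≤ K*((m:ℝ)+2)^3 := mul_le_mul hμ hc (by positivity) hK0
    calc 3*‖a‖^2 = (3*μ^2)*(m:ℝ)^2 * ‖c m‖^2 := by rw [hA]; ring
      _ ≤ K*((m:ℝ)+2)^3 * ‖c m‖^2 := mul_le_mul_of_nonneg_right key (sq_nonneg _)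
      _ = K * auxD c m := by unfold auxD; ring
  have tB : 3*‖b‖^2 ≤ K * auxD c (m+1) := by
    have hc : (m:ℝ)^2 * ((m:ℝ)+1) ≤ (((m+1:ℕ):ℝ)+2)^3 := by
      push_cast; nlinarith [hm0, hm2, hm3]
    have key : (3*lam^2)*((m:ℝ)^2*((m:ℝ)+1)) ≤ K*((((m+1:ℕ)):ℝ)+2)^3 :=
      mul_le_mul hlam2 hc (by positivity) hK0
    calc 3*‖b‖^2 = (3*lam^2)*((m:ℝ)^2*((m:ℝ)+1)) * ‖c (m+1)‖^2 := by rw [hB]; ring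
      _ ≤ K*((((m+1:ℕ)):ℝ)+2)^3 * ‖c (m+1)‖^2 := mul_le_mul_of_nonneg_right key (sq_nonneg _)
      _ = K * auxD c (m+1) := by unfold auxD; ring
  have tD : 3*‖d‖^2 ≤ K * auxD c (m-1) := by
    rcases m with _|k
    · have : ‖d‖^2 = 0 := by rw [hD]; norm_num
      rw [this]
      have h0 := mul_nonneg hK0 (auxD_nonneg c (0-1))
      linarith
    · have hk0 : (0:ℝ) ≤ (k:ℝ) := Nat.cast_nonneg k
      have hc : (((k+1:ℕ):ℝ)-1)^2 * ((k+1:ℕ):ℝ) ≤ (((k:ℕ):ℝ)+2)^3 := by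
        push_cast
        nlinarith [hk0, mul_nonneg hk0 hk0, mul_nonneg (mul_nonneg hk0 hk0) hk0]
      have key : (3*lam^2)*((((k+1:ℕ):ℝ)-1)^2 * ((k+1:ℕ):ℝ)) ≤ K*(((k:ℕ):ℝ)+2)^3 :=
        mul_le_mul hlam2 hc (by positivity) hK0
      have hred : (k+1) - 1 = k := rfl
      calc 3*‖d‖^2 = (3*lam^2)*((((k+1:ℕ):ℝ)-1)^2 * ((k+1:ℕ):ℝ)) * ‖c ((k+1)-1)‖^2 := by
            rw [hD]; ring
        _ ≤ K*(((k:ℕ):ℝ)+2)^3 * ‖c ((k+1)-1)‖^2 := mul_le_mul_of_nonneg_right key (sq_nonneg _)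
        _ = K * auxD c ((k+1)-1) := by rw [hred]; unfold auxD; ring
  calc ‖hCoef μ lam c m‖^2 ≤ 3*(‖a‖^2 + ‖b‖^2 + ‖d‖^2) := le_trans h2 h3
    _ = 3*‖a‖^2 + 3*‖b‖^2 + 3*‖d‖^2 := by ring
    _ ≤ K * auxD c m + K * auxD c (m+1) + K * auxD c (m-1) := by linarith
    _ = K * (auxD c m + auxD c (m+1) + auxD c (m-1)) := by ring
/-- For all real `μ`, `λ` and every `ε > 0` there is `C_ε > 0` such that
`|⟨H_{μ,λ} φ, φ⟩| ≤ ε ⟨G φ, φ⟩ + C_ε ‖φ‖²` for all `φ ∈ D(G)`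
(with `⟨Gφ, φ⟩ = ‖a³φ‖² ≥ 0` real, so it is taken as the real part below; note that the
paper's inner product is conjugate-linear in the second variable, so the paper's
`⟨Hφ, φ⟩` is Mathlib's `⟪φ, Hφ⟫`). -/
theorem gribov_H_form_bounded_by_G
    {E : Type} [NormedAddCommGroup E] [InnerProductSpace ℂ E] [CompleteSpace E]
    (e : HilbertBasis ℕ ℂ E) (μ lam : ℝ) (G H : E →ₗ.[ℂ] E)
    (hGdom : ∀ φ : E, φ ∈ G.domain ↔ Summable fun n : ℕ => gEig n ^ 2 * ‖e.repr φ n‖ ^ 2)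
    (hGact : ∀ (φ : G.domain) (n : ℕ), e.repr (G φ) n = (gEig n : ℂ) * e.repr (φ : E) n)
    (hHdom : ∀ φ : E,
      φ ∈ H.domain ↔ Summable fun m : ℕ => ‖hCoef μ lam (fun n => e.repr φ n) m‖ ^ 2)
    (hHact : ∀ (φ : H.domain) (m : ℕ),
      e.repr (H φ) m = hCoef μ lam (fun n => e.repr (φ : E) n) m) :
    ∀ ε : ℝ, 0 < ε → ∃ C : ℝ, 0 < C ∧
      ∀ φ : G.domain, ∃ h : (φ : E) ∈ H.domain,
        ‖⟪(φ : E), H ⟨(φ : E), h⟩⟫‖ ≤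
          ε * (⟪(φ : E), G φ⟫).re + C * ‖(φ : E)‖ ^ 2 := by
  intro ε hε
  set K : ℝ := 3*(μ^2 + 2*lam^2) + 1 with hKdef
  have hK1 : 1 ≤ K := by nlinarith [sq_nonneg μ, sq_nonneg lam]
  have hKpos : (0:ℝ) < K := by linarith
  have hμK : 3*μ^2 ≤ K := by nlinarith [sq_nonneg lam]
  have hlamK : 3*lam^2 ≤ K := by nlinarith [sq_nonneg μ, sq_nonneg lam]
  set C : ℝ := (250*K + ε*(16*K+1))/ε with hCdef
  have hCpos : 0 < C := by rw [hCdef]; positivity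
  have hεC : ε * C = 250*K + ε*(16*K+1) := by
    rw [hCdef]; field_simp
  have hC16 : 16*K+1 ≤ C := by
    rw [hCdef, le_div_iff₀ hε]; nlinarith
  refine ⟨C, hCpos, ?_⟩
  intro φ
  set c : ℕ → ℂ := fun n => e.repr (φ:E) n with hc
  have hg2 : Summable fun n => gEig n ^2 * ‖c n‖^2 := (hGdom _).mp φ.2
  have hs0 : Summable fun n => ‖c n‖^2 := aux_summable_sq e (φ:E)
  have hs1 : Summable fun n => gEig n * ‖c n‖^2 := by
    refine Summable.of_nonneg_of_le
      (fun n => mul_nonneg (gEig_nonneg n) (sq_nonneg _)) (fun n => ?_)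
      ((hg2.add hs0).mul_left (1/2))
    have := gEig_nonneg n
    nlinarith [sq_nonneg (gEig n - 1), sq_nonneg ‖c n‖]
  have hsD : Summable (auxD c) := by
    refine Summable.of_nonneg_of_le (auxD_nonneg c) (fun n => ?_)
      ((hs1.mul_left 125).add (hs0.mul_left 64))
    have h := mul_le_mul_of_nonneg_right (cube_le_gEig n) (sq_nonneg ‖c n‖)
    unfold auxD
    nlinarith [h]
  have hsD1 : Summable fun m => auxD c (m+1) := (summable_nat_add_iff 1).2 hsD
  have hsDm : Summable fun m => auxD c (m-1) := by
    rw [← summable_nat_add_iff 1]; simpa using hsD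
  have hsH : Summable fun m => ‖hCoef μ lam c m‖^2 :=
    Summable.of_nonneg_of_le (fun m => sq_nonneg _)
      (fun m => hCoef_sq_le μ lam K hμK hlamK c m)
      (((hsD.add hsD1).add hsDm).mul_left K)
  have hmem : (φ:E) ∈ H.domain := (hHdom _).mpr hsH
  refine ⟨hmem, ?_⟩
  set ψ : E := H ⟨(φ:E), hmem⟩ with hψ
  set Q : ℝ := ∑' n, gEig n * ‖c n‖^2 with hQ
  have hQnn : 0 ≤ Q := tsum_nonneg fun n => mul_nonneg (gEig_nonneg n) (sq_nonneg _)
  -- the G-form equals Q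
  have hinnerG : (⟪(φ:E), G φ⟫).re = Q := by
    have h2 : ⟪(φ:E), G φ⟫ = ((Q:ℝ):ℂ) := by
      rw [aux_inner_tsum e (φ:E) (G φ), hQ, Complex.ofReal_tsum]
      refine tsum_congr fun n => ?_
      rw [hGact φ n]
      rw [show (starRingEnd ℂ) (e.repr (φ:E) n) * ((gEig n:ℂ) * e.repr (φ:E) n)
          = (gEig n:ℂ) * ((starRingEnd ℂ) (e.repr (φ:E) n) * e.repr (φ:E) n) from by ring,
        RCLike.conj_mul]
      rw [hc]
      norm_cast
      simp [Complex.ofReal_mul]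
    rw [h2, Complex.ofReal_re]
  -- ‖ψ‖² as a sum
  have hψsq : ‖ψ‖^2 = ∑' m, ‖hCoef μ lam c m‖^2 := by
    rw [aux_norm_sq e ψ]
    refine tsum_congr fun m => ?_
    rw [hψ, hHact ⟨(φ:E), hmem⟩ m]
  -- sum bounds
  have hT1 : ∑' m, ‖hCoef μ lam c m‖^2
      ≤ K * ((∑' m, auxD c m) + (∑' m, auxD c (m+1)) + (∑' m, auxD c (m-1))) := by
    have h := Summable.tsum_le_tsum (fun m => hCoef_sq_le μ lam K hμK hlamK c m) hsH
      (((hsD.add hsD1).add hsDm).mul_left K)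
    rwa [tsum_mul_left, Summable.tsum_add (hsD.add hsD1) hsDm, Summable.tsum_add hsD hsD1] at h
  have hshift1 : ∑' m, auxD c (m+1) ≤ ∑' m, auxD c m := by
    have h0 := Summable.tsum_eq_zero_add hsD
    have := auxD_nonneg c 0
    linarith
  have hshiftm : ∑' m, auxD c (m-1) ≤ 2 * ∑' m, auxD c m := by
    have h0 := Summable.tsum_eq_zero_add hsDm
    simp only [Nat.zero_sub, Nat.add_sub_cancel] at h0
    have hD0 : auxD c 0 ≤ ∑' m, auxD c m := Summable.le_tsum hsD 0 (fun n _ => auxD_nonneg c n)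
    linarith
  have hTD : ∑' m, auxD c m ≤ 125 * Q + 64 * ‖(φ:E)‖^2 := by
    have hb := Summable.tsum_le_tsum (fun n => ?_) hsD ((hs1.mul_left 125).add (hs0.mul_left 64))
    · rw [Summable.tsum_add (hs1.mul_left 125) (hs0.mul_left 64), tsum_mul_left, tsum_mul_left] at hb
      rw [aux_norm_sq e (φ:E)]
      exact hb
    · have h := mul_le_mul_of_nonneg_right (cube_le_gEig n) (sq_nonneg ‖c n‖)
      unfold auxD
      nlinarith [h]
  have hψbound : ‖ψ‖^2 ≤ 500*K*Q + 256*K*‖(φ:E)‖^2 := by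
    have h4 : ∑' m, ‖hCoef μ lam c m‖^2 ≤ K * (4 * ∑' m, auxD c m) := by
      refine le_trans hT1 (mul_le_mul_of_nonneg_left ?_ hKpos.le)
      linarith
    have h5 : K * (4 * ∑' m, auxD c m) ≤ K * (4 * (125 * Q + 64 * ‖(φ:E)‖^2)) := by
      refine mul_le_mul_of_nonneg_left ?_ hKpos.le
      linarith
    rw [hψsq]
    nlinarith [h4, h5]
  -- conclusion
  have hCS : ‖⟪(φ:E), ψ⟫‖ ≤ ‖(φ:E)‖ * ‖ψ‖ := norm_inner_le_norm _ _
  have hN : (0:ℝ) ≤ ‖(φ:E)‖^2 := sq_nonneg _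
  have hQN : (0:ℝ) ≤ Q * ‖(φ:E)‖^2 := mul_nonneg hQnn hN
  have hCsq : 256*K ≤ C^2 := by
    have h := mul_le_mul hC16 hC16 (by positivity) (le_trans (by positivity) hC16)
    nlinarith [h, hK1, mul_nonneg (le_trans zero_le_one hK1) (sub_nonneg.2 hK1)]
  have key2 : ε*C*(Q*‖(φ:E)‖^2) = (250*K+ε*(16*K+1))*(Q*‖(φ:E)‖^2) := by rw [hεC]
  have step1 : (‖(φ:E)‖*‖ψ‖)^2 ≤ ‖(φ:E)‖^2*(500*K*Q+256*K*‖(φ:E)‖^2) := by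
    have h : (‖(φ:E)‖*‖ψ‖)^2 = ‖(φ:E)‖^2*‖ψ‖^2 := by ring
    rw [h]
    exact mul_le_mul_of_nonneg_left hψbound hN
  have step2 : ‖(φ:E)‖^2*(500*K*Q+256*K*‖(φ:E)‖^2) ≤ (ε*Q+C*‖(φ:E)‖^2)^2 := by
    nlinarith [key2, hCsq, hQN, hN, hQnn, sq_nonneg (ε*Q),
      mul_nonneg (sub_nonneg.2 hCsq) (sq_nonneg (‖(φ:E)‖^2)),
      mul_nonneg (mul_nonneg hε.le hKpos.le) hQN,
      mul_nonneg hε.le hQN]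
  have hRnn : 0 ≤ ε*Q + C*‖(φ:E)‖^2 :=
    add_nonneg (mul_nonneg hε.le hQnn) (mul_nonneg hCpos.le hN)
  have hfin : ‖(φ:E)‖*‖ψ‖ ≤ ε*Q + C*‖(φ:E)‖^2 := by
    nlinarith [step1, step2, hRnn, mul_nonneg (norm_nonneg (φ:E)) (norm_nonneg ψ)]
  rw [hinnerG]
  calc ‖⟪(φ:E), ψ⟫‖ ≤ ‖(φ:E)‖ * ‖ψ‖ := hCS
    _ ≤ ε*Q + C*‖(φ:E)‖^2 := hfin
end
end
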